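/- Let 𝒯 be a probabilistic and/xor tree whose leaves are tuples t_1,…,t_n listed in strictly decreasing order of score, and fix a tuple t_i. Assign the variable x to every leaf t_l with l < i, the variable y to the leaf t_i, and the constant 1 to every leaf t_l with l > i, and let F^i(x,y) be the resulting generating function of 𝒯. Then for every j ≥ 1, the coefficient of x^{j−1}·y in F^i equals Pr(r(t_i)=j), the probability that t_i belongs to the random subset S generated by 𝒯 and exactly j−1 of the leaves t_1,…,t_{i−1} belong to S. -/
import Mathlib


/-- A probabilistic and/xor tree with leaves labeled by elements of `L`.
An ∨-node (`xor` node) carries, for each child, the probability of the edge to that child;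
an ∧-node (`and` node) simply has a list of children. -/
inductive AXTree (L : Type) : Type
  | leaf : L → AXTree L
  | orNode : List (ℝ × AXTree L) → AXTree L
  | andNode : List (AXTree L) → AXTree L

namespace AXTree

variable {L : Type}

mutual
/-- Validity of a probabilistic and/xor tree: at each ∨-node, edge probabilities are
nonnegative and sum to at most 1. -/
def valid : AXTree L → Prop
  | .leaf _ => True
  | .orNode cs => (cs.map Prod.fst).sum ≤ 1 ∧ validOr cs
  | .andNode cs => validAnd cs

def validOr : List (ℝ × AXTree L) → Prop
  | [] => True
  | (q, c) :: cs => 0 ≤ q ∧ valid c ∧ validOr cs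

def validAnd : List (AXTree L) → Prop
  | [] => True
  | c :: cs => valid c ∧ validAnd cs
end

mutual
/-- The multiset of (labels of) leaves of an and/xor tree. -/
def leaves : AXTree L → Multiset L
  | .leaf a => {a}
  | .orNode cs => leavesOr cs
  | .andNode cs => leavesAnd cs

def leavesOr : List (ℝ × AXTree L) → Multiset L
  | [] => 0
  | (_, c) :: cs => leaves c + leavesOr cs

def leavesAnd : List (AXTree L) → Multiset L
  | [] => 0
  | c :: cs => leaves c + leavesAnd cs
end

mutual
/-- `dist 𝒯 s` is the probability that the random subset (multiset of leaves) generated by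
the and/xor tree `𝒯` equals `s`: a leaf generates itself; an ∨-node generates the subset of
its `l`-th child with the probability of the corresponding edge, and the empty set with the
remaining probability; an ∧-node generates the (disjoint) union of the independently
generated subsets of its children. -/
noncomputable def dist [DecidableEq L] : AXTree L → Multiset L → ℝ
  | .leaf a, s => if s = {a} then 1 else 0
  | .orNode cs, s => (if s = 0 then 1 - (cs.map Prod.fst).sum else 0) + distOr cs s
  | .andNode cs, s => distAnd cs s

noncomputable def distOr [DecidableEq L] : List (ℝ × AXTree L) → Multiset L → ℝ
  | [], _ => 0
  | (q, c) :: cs, s => q * dist c s + distOr cs s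

/-- Convolution over a list of independent children of an ∧-node. -/
noncomputable def distAnd [DecidableEq L] : List (AXTree L) → Multiset L → ℝ
  | [], s => if s = 0 then 1 else 0
  | c :: cs, s => ∑ t ∈ s.powerset.toFinset, dist c t * distAnd cs (s - t)
end

mutual
/-- The generating function of an and/xor tree with respect to a labeling `π` of its
leaves by elements of a commutative ℝ-algebra `R` (e.g. variables of a polynomial ring):
`F_v = π v` at a leaf, `F_v = (1 - Σ_l p_l) + Σ_l p_l · F_{v_l}` at an ∨-node, and
`F_v = ∏_l F_{v_l}` at an ∧-node. -/
noncomputable def genFun {R : Type} [CommRing R] [Algebra ℝ R] (π : L → R) : AXTree L → R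
  | .leaf a => π a
  | .orNode cs => algebraMap ℝ R (1 - (cs.map Prod.fst).sum) + genFunOr π cs
  | .andNode cs => genFunAnd π cs

noncomputable def genFunOr {R : Type} [CommRing R] [Algebra ℝ R] (π : L → R) :
    List (ℝ × AXTree L) → R
  | [] => 0
  | (q, c) :: cs => algebraMap ℝ R q * genFun π c + genFunOr π cs

noncomputable def genFunAnd {R : Type} [CommRing R] [Algebra ℝ R] (π : L → R) :
    List (AXTree L) → R
  | [] => 1
  | c :: cs => genFun π c * genFunAnd π cs
end

variable [DecidableEq L]

mutual
theorem dist_eq_zero : ∀ (T : AXTree L) (s : Multiset L), ¬ s ≤ leaves T → dist T s = 0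
  | .leaf a, s, h => by
      rw [dist, if_neg]
      intro hs; exact h (hs ▸ le_refl _)
  | .orNode cs, s, h => by
      rw [dist, distOr_eq_zero cs s (by simpa [leaves] using h), if_neg, add_zero]
      intro hs; exact h (hs ▸ Multiset.zero_le _)
  | .andNode cs, s, h => by
      rw [dist]; exact distAnd_eq_zero cs s (by simpa [leaves] using h)

theorem distOr_eq_zero : ∀ (cs : List (ℝ × AXTree L)) (s : Multiset L),
    ¬ s ≤ leavesOr cs → distOr cs s = 0
  | [], s, h => rfl
  | (q, c) :: cs, s, h => by
      rw [distOr, dist_eq_zero c s (fun h1 => h (le_trans h1 (by rw [leavesOr]; exact le_self_add))),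
        distOr_eq_zero cs s (fun h1 => h (le_trans h1 (by rw [leavesOr]; exact le_add_self))),
        mul_zero, add_zero]

theorem distAnd_eq_zero : ∀ (cs : List (AXTree L)) (s : Multiset L),
    ¬ s ≤ leavesAnd cs → distAnd cs s = 0
  | [], s, h => by
      rw [distAnd, if_neg]
      intro hs; subst hs; exact h (Multiset.zero_le _)
  | c :: cs, s, h => by
      rw [distAnd]
      apply Finset.sum_eq_zero
      intro t ht
      have hts : t ≤ s := by
        rw [Multiset.mem_toFinset, Multiset.mem_powerset] at ht; exact ht
      by_cases h1 : t ≤ leaves c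
      · rw [distAnd_eq_zero cs (s - t) (fun h2 => h ?_), mul_zero]
        rw [leavesAnd]
        calc s = t + (s - t) := (add_tsub_cancel_of_le hts).symm
        _ ≤ leaves c + leavesAnd cs := add_le_add h1 h2
      · rw [dist_eq_zero c t h1, zero_mul]
end

variable {R : Type} [CommRing R] [Algebra ℝ R] (π : L → R)

theorem conv_key (A B : Multiset L) (f g : Multiset L → ℝ)
    (hf : ∀ t, ¬ t ≤ A → f t = 0) (hg : ∀ u, ¬ u ≤ B → g u = 0) :
    (∑ t ∈ A.powerset.toFinset, algebraMap ℝ R (f t) * (t.map π).prod) *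
      (∑ u ∈ B.powerset.toFinset, algebraMap ℝ R (g u) * (u.map π).prod) =
    ∑ s ∈ (A + B).powerset.toFinset,
      algebraMap ℝ R (∑ t ∈ s.powerset.toFinset, f t * g (s - t)) * (s.map π).prod := by
  rw [Finset.sum_mul_sum]
  simp only [map_sum, Finset.sum_mul]
  rw [← Finset.sum_product']
  rw [Finset.sum_sigma']
  have key : ∀ p ∈ ((A + B).powerset.toFinset.sigma fun s => s.powerset.toFinset),
      (algebraMap ℝ R (f p.2 * g (p.1 - p.2)) * (p.1.map π).prod ≠ 0) →
      (p.2 ≤ A ∧ p.1 - p.2 ≤ B) := by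
    intro p _ hne
    by_contra hc
    push_neg at hc
    rcases em (p.2 ≤ A) with h1 | h1
    · rw [hg _ (hc h1), mul_zero, map_zero, zero_mul] at hne; exact hne rfl
    · rw [hf _ h1, zero_mul, map_zero, zero_mul] at hne; exact hne rfl
  rw [← Finset.sum_filter_of_ne key]
  refine (Finset.sum_bij' (fun a _ => (⟨a.1 + a.2, a.1⟩ : Σ _ : Multiset L, Multiset L))
    (fun b _ => ((b.2, b.1 - b.2) : Multiset L × Multiset L)) ?_ ?_ ?_ ?_ ?_)
  · intro a ha
    simp only [Finset.mem_product, Multiset.mem_toFinset, Multiset.mem_powerset] at ha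
    simp only [Finset.mem_filter, Finset.mem_sigma, Multiset.mem_toFinset, Multiset.mem_powerset]
    exact ⟨⟨add_le_add ha.1 ha.2, le_self_add⟩, ha.1, by rw [add_tsub_cancel_left]; exact ha.2⟩
  · intro b hb
    simp only [Finset.mem_filter, Finset.mem_sigma, Multiset.mem_toFinset, Multiset.mem_powerset] at hb
    simp only [Finset.mem_product, Multiset.mem_toFinset, Multiset.mem_powerset]
    exact hb.2
  · intro a ha
    simp only [add_tsub_cancel_left]
  · intro b hb
    simp only [Finset.mem_filter, Finset.mem_sigma, Multiset.mem_toFinset, Multiset.mem_powerset] at hb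
    have : b.2 + (b.1 - b.2) = b.1 := add_tsub_cancel_of_le hb.1.2
    simp only [this]
  · intro a ha
    simp only [add_tsub_cancel_left, map_mul]
    rw [Multiset.map_add, Multiset.prod_add]
    ring

theorem powerset_toFinset_subset {A B : Multiset L} (h : A ≤ B) :
    A.powerset.toFinset ⊆ B.powerset.toFinset := by
  intro x hx
  rw [Multiset.mem_toFinset, Multiset.mem_powerset] at *
  exact le_trans hx h

mutual
theorem genFun_eq : ∀ T : AXTree L,
    genFun π T = ∑ s ∈ (leaves T).powerset.toFinset,
      algebraMap ℝ R (dist T s) * (s.map π).prod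
  | .leaf a => by
      rw [genFun, leaves]
      rw [Finset.sum_congr rfl (fun s _ => ?_), Finset.sum_ite_eq' _ ({a} : Multiset L)
        (fun _ => π a), if_pos (by rw [Multiset.mem_toFinset, Multiset.mem_powerset])]
      rw [dist]
      split
      · next h => subst h; simp
      · simp
  | .orNode cs => by
      rw [genFun, leaves, genFunOr_eq cs]
      have h1 : ∀ s ∈ (leavesOr cs).powerset.toFinset,
          algebraMap ℝ R (dist (.orNode cs) s) * (s.map π).prod
            = (if s = 0 then algebraMap ℝ R (1 - (cs.map Prod.fst).sum) else 0)
              + algebraMap ℝ R (distOr cs s) * (s.map π).prod := by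
        intro s _
        rw [dist, map_add, add_mul]
        congr 1
        split
        · next h => subst h; simp
        · simp
      rw [Finset.sum_congr rfl h1, Finset.sum_add_distrib,
        Finset.sum_ite_eq' _ (0 : Multiset L),
        if_pos (by rw [Multiset.mem_toFinset, Multiset.mem_powerset]; exact Multiset.zero_le _)]
  | .andNode cs => by
      rw [genFun, leaves, genFunAnd_eq cs]
      apply Finset.sum_congr rfl
      intro s _
      rw [dist]

theorem genFunOr_eq : ∀ cs : List (ℝ × AXTree L),
    genFunOr π cs = ∑ s ∈ (leavesOr cs).powerset.toFinset,
      algebraMap ℝ R (distOr cs s) * (s.map π).prod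
  | [] => by simp [genFunOr, leavesOr, distOr]
  | (q, c) :: cs => by
      rw [genFunOr, genFunOr_eq cs, genFun_eq c, leavesOr, Finset.mul_sum]
      have e1 : ∑ s ∈ (leaves c).powerset.toFinset,
            algebraMap ℝ R q * (algebraMap ℝ R (dist c s) * (s.map π).prod)
          = ∑ s ∈ (leaves c + leavesOr cs).powerset.toFinset,
            algebraMap ℝ R q * (algebraMap ℝ R (dist c s) * (s.map π).prod) :=
        Finset.sum_subset (powerset_toFinset_subset le_self_add) (fun x _ hx => by
          rw [dist_eq_zero c x (fun hc => hx (by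
            rw [Multiset.mem_toFinset, Multiset.mem_powerset]; exact hc))]; simp)
      have e2 : ∑ s ∈ (leavesOr cs).powerset.toFinset,
            algebraMap ℝ R (distOr cs s) * (s.map π).prod
          = ∑ s ∈ (leaves c + leavesOr cs).powerset.toFinset,
            algebraMap ℝ R (distOr cs s) * (s.map π).prod :=
        Finset.sum_subset (powerset_toFinset_subset le_add_self) (fun x _ hx => by
          rw [distOr_eq_zero cs x (fun hc => hx (by
            rw [Multiset.mem_toFinset, Multiset.mem_powerset]; exact hc))]; simp)
      rw [e1, e2, ← Finset.sum_add_distrib]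
      apply Finset.sum_congr rfl
      intro s _
      rw [distOr, map_add, add_mul, map_mul, mul_assoc]

theorem genFunAnd_eq : ∀ cs : List (AXTree L),
    genFunAnd π cs = ∑ s ∈ (leavesAnd cs).powerset.toFinset,
      algebraMap ℝ R (distAnd cs s) * (s.map π).prod
  | [] => by simp [genFunAnd, leavesAnd, distAnd]
  | c :: cs => by
      rw [genFunAnd, genFun_eq c, genFunAnd_eq cs, leavesAnd,
        conv_key π (leaves c) (leavesAnd cs) _ _ (dist_eq_zero c) (distAnd_eq_zero cs)]
      apply Finset.sum_congr rfl
      intro s _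
      rw [distAnd]
end

end AXTree

lemma finsupp_pair_eq (a b c d : ℕ) :
    Finsupp.single (0 : Fin 2) a + Finsupp.single 1 b
      = Finsupp.single (0 : Fin 2) c + Finsupp.single 1 d ↔ (a = c ∧ b = d) := by
  constructor
  · intro h
    have h0 := DFunLike.congr_fun h 0
    have h1 := DFunLike.congr_fun h 1
    simp [Finsupp.single_apply, (by decide : (1 : Fin 2) ≠ 0),
      (by decide : (0 : Fin 2) ≠ 1)] at h0 h1
    exact ⟨h0, h1⟩
  · rintro ⟨rfl, rfl⟩; rfl

lemma prod_pi {n : ℕ} (i : Fin n) (s : Multiset (Fin n)) :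
    (s.map (fun l => if l < i then (MvPolynomial.X 0 : MvPolynomial (Fin 2) ℝ)
      else if l = i then MvPolynomial.X 1 else 1)).prod
    = MvPolynomial.X 0 ^ (s.filter (fun l => l < i)).card * MvPolynomial.X 1 ^ s.count i := by
  induction s using Multiset.induction_on with
  | empty => simp
  | cons a s ih =>
    rw [Multiset.map_cons, Multiset.prod_cons, ih, Multiset.filter_cons, Multiset.count_cons]
    by_cases h1 : a < i
    · have h2 : a ≠ i := ne_of_lt h1
      simp only [if_pos h1, if_neg (Ne.symm h2), Multiset.card_add,
        Multiset.card_singleton, add_zero]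
      ring
    · by_cases h2 : a = i
      · subst h2
        simp only [if_neg h1, if_pos rfl, eq_self_iff_true, if_true, zero_add]
        ring
      · simp only [if_neg h1, if_neg h2, if_neg (Ne.symm h2), zero_add, add_zero, one_mul]


/-- Let `𝒯` be a probabilistic and/xor tree whose leaves are the tuples
`t_0, …, t_{n-1}` (each occurring exactly once), listed in strictly decreasing order of score,
and fix a tuple `t_i`.  Assign the variable `x` (= `X 0`) to every leaf `t_l` with `l < i`,
the variable `y` (= `X 1`) to the leaf `t_i`, and the constant `1` to every leaf `t_l` with
`l > i`.  Then for every `j ≥ 1`, the coefficient of `x^(j-1)·y` in the resulting generating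
function `F^i(x,y)` equals `Pr(r(t_i) = j)`: the probability that `t_i` belongs to the random
subset `S` generated by `𝒯` and exactly `j - 1` of the higher-score leaves belong to `S`. -/
theorem AXTree.coeff_genFun_eq_posProb (n : ℕ) (𝒯 : AXTree (Fin n)) (hval : 𝒯.valid)
    (hleaves : AXTree.leaves 𝒯 = (Finset.univ : Finset (Fin n)).val)
    (i : Fin n) (j : ℕ) (hj : 1 ≤ j) :
    MvPolynomial.coeff (Finsupp.single (0 : Fin 2) (j - 1) + Finsupp.single (1 : Fin 2) 1)
      (AXTree.genFun
        (fun l => if l < i then (MvPolynomial.X 0 : MvPolynomial (Fin 2) ℝ)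
                  else if l = i then MvPolynomial.X 1 else 1) 𝒯) =
      ∑ s ∈ (AXTree.leaves 𝒯).powerset.toFinset.filter
          (fun s => i ∈ s ∧ (s.filter (fun l => l < i)).card = j - 1),
        AXTree.dist 𝒯 s := by
  rw [AXTree.genFun_eq, MvPolynomial.coeff_sum]
  have hterm : ∀ s ∈ (AXTree.leaves 𝒯).powerset.toFinset,
      MvPolynomial.coeff (Finsupp.single (0 : Fin 2) (j - 1) + Finsupp.single (1 : Fin 2) 1)
        (algebraMap ℝ (MvPolynomial (Fin 2) ℝ) (AXTree.dist 𝒯 s) *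
          (s.map (fun l => if l < i then (MvPolynomial.X 0 : MvPolynomial (Fin 2) ℝ)
            else if l = i then MvPolynomial.X 1 else 1)).prod)
      = if i ∈ s ∧ (s.filter (fun l => l < i)).card = j - 1 then AXTree.dist 𝒯 s else 0 := by
    intro s hs
    have hsle : s ≤ AXTree.leaves 𝒯 := by
      rwa [Multiset.mem_toFinset, Multiset.mem_powerset] at hs
    have hnd : s.Nodup := Multiset.nodup_of_le (hleaves ▸ hsle) Finset.univ.nodup
    rw [MvPolynomial.algebraMap_eq, MvPolynomial.coeff_C_mul, prod_pi,
      MvPolynomial.X_pow_eq_monomial, MvPolynomial.X_pow_eq_monomial,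
      MvPolynomial.monomial_mul, one_mul, MvPolynomial.coeff_monomial, mul_ite, mul_one,
      mul_zero]
    have hcount : s.count i = 1 ↔ i ∈ s :=
      ⟨fun h => Multiset.count_pos.mp (by rw [h]; norm_num),
       fun h => Multiset.count_eq_one_of_mem hnd h⟩
    have hcond : (Finsupp.single (0 : Fin 2) ((s.filter (fun l => l < i)).card)
        + Finsupp.single 1 (s.count i)
        = Finsupp.single (0 : Fin 2) (j - 1) + Finsupp.single 1 1)
        ↔ (i ∈ s ∧ (s.filter (fun l => l < i)).card = j - 1) := by
      rw [finsupp_pair_eq, hcount]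
      exact ⟨fun h => ⟨h.2, h.1⟩, fun h => ⟨h.2, h.1⟩⟩
    rw [if_congr hcond rfl rfl]
  rw [Finset.sum_congr rfl hterm]
  exact (Finset.sum_filter _ _).symm
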